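/- arXiv:1410.1318 — 2 statements merged into one kernel-verified Lean document; each statement's English description precedes it below -/
import Mathlib

section
/- Let 0 < ε < 2 and let f : F_2^n → F_2 have at most n^{3−ε} crucial terms, i.e., T^{≥3}(f) ≤ n^{3−ε}. Then there exists a 0-restriction f' of f on n' = ⌊√((2/3)·n^ε)⌋ variables with T^{≥3}(f') ≤ (2/3)n'. -/
open Finset

/-- Evaluation of the multilinear polynomial over `F₂` whose set of monomials is `M`. -/
def anfEval {n : ℕ} (M : Finset (Finset (Fin n))) (x : Fin n → ZMod 2) : ZMod 2 :=
  ∑ S ∈ M, ∏ j ∈ S, x j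

/-- `M` is the algebraic normal form (set of monomials) of the Boolean function `f`. -/
def IsANF {n : ℕ} (f : (Fin n → ZMod 2) → ZMod 2) (M : Finset (Finset (Fin n))) : Prop :=
  ∀ x, f x = anfEval M x

/-- The number of crucial terms (monomials of degree at least 3) of an ANF. -/
def crucialCount {n : ℕ} (M : Finset (Finset (Fin n))) : ℕ :=
  (M.filter fun S => 3 ≤ S.card).card

/-- The `0`-restriction of `f` keeping exactly the variables in `K` (all other
variables are set to the constant `0`). It is a Boolean function on `K.card` variables. -/
def zeroRestrict {n : ℕ} (f : (Fin n → ZMod 2) → ZMod 2) (K : Finset (Fin n)) :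
    (Fin n → ZMod 2) → ZMod 2 :=
  fun x => f fun i => if i ∈ K then x i else 0


/-! A monomial of degree at least 3 survives the `0`-restriction to a set `K` of variables
exactly when it is contained in `K`, and for fixed `S` with `#S ≥ 3` a uniformly random
`m`-subset `K` of the `n` variables contains `S` with probability at most `(m/n)^3`. Hence some
`K` keeps at most `T^{≥3}(f) · (m/n)^3 ≤ n^{3-ε} m^3 / n^3 ≤ (2/3) m` crucial terms, the last
step because `m² ≤ (2/3) n^ε` for `m = ⌊√((2/3) n^ε)⌋`. That these surviving monomials are the
crucial terms of the restriction is uniqueness of the ANF. -/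

section ANF

variable {n : ℕ}

lemma anfEval_indicator (M : Finset (Finset (Fin n))) (S : Finset (Fin n)) :
    anfEval M (fun j => if j ∈ S then 1 else 0) = #{T ∈ M | T ⊆ S} := by
  simp [anfEval, prod_boole, ← subset_iff]

lemma eq_empty_of_anfEval_eq_zero {M : Finset (Finset (Fin n))} (h : ∀ x, anfEval M x = 0) :
    M = ∅ := by
  by_contra hne
  obtain ⟨S, hS, hmin⟩ := exists_min_image M card (nonempty_of_ne_empty hne)
  have hsingle : {T ∈ M | T ⊆ S} = {S} := by
    ext T
    simp only [mem_filter, mem_singleton]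
    exact ⟨fun ⟨hT, hTS⟩ => eq_of_subset_of_card_le hTS (hmin T hT),
      by rintro rfl; exact ⟨hS, subset_rfl⟩⟩
  have h1 := h fun j => if j ∈ S then 1 else 0
  rw [anfEval_indicator, hsingle, card_singleton, Nat.cast_one] at h1
  exact one_ne_zero h1

lemma anfEval_symmDiff (M₁ M₂ : Finset (Finset (Fin n))) (x : Fin n → ZMod 2) :
    anfEval (symmDiff M₁ M₂) x = anfEval M₁ x + anfEval M₂ x := by
  have hsdiff := sum_sdiff (f := fun S => ∏ j ∈ S, x j) (inter_subset_union (s := M₁) (t := M₂))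
  have hunion := sum_union_inter (f := fun S => ∏ j ∈ S, x j) (s₁ := M₁) (s₂ := M₂)
  rw [anfEval, anfEval, anfEval, symmDiff_eq_sup_sdiff_inf]
  linear_combination hsdiff + hunion - CharTwo.add_self_eq_zero (∑ S ∈ M₁ ∩ M₂, ∏ j ∈ S, x j)

lemma IsANF.unique {f : (Fin n → ZMod 2) → ZMod 2} {M₁ M₂ : Finset (Finset (Fin n))}
    (h₁ : IsANF f M₁) (h₂ : IsANF f M₂) : M₁ = M₂ := by
  refine symmDiff_eq_bot.mp (eq_empty_of_anfEval_eq_zero fun x => ?_)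
  rw [anfEval_symmDiff, ← h₁ x, ← h₂ x, CharTwo.add_self_eq_zero]

lemma isANF_zeroRestrict {f : (Fin n → ZMod 2) → ZMod 2} {M : Finset (Finset (Fin n))}
    (hM : IsANF f M) (K : Finset (Fin n)) : IsANF (zeroRestrict f K) {S ∈ M | S ⊆ K} := by
  intro x
  rw [zeroRestrict, hM, anfEval, anfEval, sum_filter]
  refine sum_congr rfl fun S _ => ?_
  split_ifs with hSK
  · exact prod_congr rfl fun j hj => if_pos (hSK hj)
  · obtain ⟨j, hj, hjK⟩ := not_subset.mp hSK
    exact prod_eq_zero hj (if_neg hjK)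

lemma IsANF.crucialCount_eq {f : (Fin n → ZMod 2) → ZMod 2} {M M' : Finset (Finset (Fin n))}
    (hM : IsANF f M) {K : Finset (Fin n)} (hM' : IsANF (zeroRestrict f K) M') :
    crucialCount M' = #{S ∈ M | 3 ≤ #S ∧ S ⊆ K} := by
  rw [hM'.unique (isANF_zeroRestrict hM K), crucialCount, filter_filter]
  simp only [and_comm]

end ANF

theorem Nat.choose_mul_pow_le_pow_mul_choose {m n : ℕ} (hmn : m ≤ n) (k : ℕ) :
    m.choose k * n ^ k ≤ m ^ k * n.choose k := by
  suffices h : m.descFactorial k * n ^ k ≤ m ^ k * n.descFactorial k by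
    rw [descFactorial_eq_factorial_mul_choose, descFactorial_eq_factorial_mul_choose] at h
    refine Nat.le_of_mul_le_mul_left ?_ k.factorial_pos
    linarith
  induction k with
  | zero => simp
  | succ k ih =>
    have hstep : (m - k) * n ≤ m * (n - k) := by
      rw [Nat.sub_mul, Nat.mul_sub]
      exact Nat.sub_le_sub_left (by rw [mul_comm k]; exact Nat.mul_le_mul_right k hmn) _
    rw [descFactorial_succ, descFactorial_succ]
    calc (m - k) * m.descFactorial k * n ^ (k + 1)
        = (m - k) * n * (m.descFactorial k * n ^ k) := by ring
      _ ≤ m * (n - k) * (m ^ k * n.descFactorial k) := Nat.mul_le_mul hstep ih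
      _ = m ^ (k + 1) * ((n - k) * n.descFactorial k) := by ring

section Counting

variable {α : Type*} [Fintype α] [DecidableEq α]

theorem Finset.exists_card_eq_card_filter_subset_mul_choose_le (T : Finset (Finset α)) {k m : ℕ}
    (hT : ∀ S ∈ T, k ≤ #S) (hkm : k ≤ m) (hm : m ≤ Fintype.card α) :
    ∃ K : Finset α, #K = m ∧
      #{S ∈ T | S ⊆ K} * (Fintype.card α).choose k ≤ #T * m.choose k := by
  set n := Fintype.card α
  set A := (univ : Finset α).powersetCard m
  have hA : #A = n.choose m := by simp [A, n]
  have hsupersets : ∀ S ∈ T, #{K ∈ A | S ⊆ K} ≤ (n - k).choose (m - k) := by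
    intro S hS
    obtain ⟨S₀, hS₀S, hS₀⟩ := exists_subset_card_eq (hT S hS)
    calc #{K ∈ A | S ⊆ K} ≤ #{K ∈ A | S₀ ⊆ K} :=
          card_le_card (monotone_filter_right _ fun _ _ hK => hS₀S.trans hK)
      _ = (n - k).choose (m - k) := by
          rw [card_filter_powersetCard_subset _ _ _ (subset_univ _) (hS₀ ▸ hkm), card_univ, hS₀]
  obtain ⟨K, hKA, hKmin⟩ := exists_min_image A (fun K => #{S ∈ T | S ⊆ K})
    (card_pos.mp (hA ▸ Nat.choose_pos hm))
  refine ⟨K, (mem_powersetCard.mp hKA).2, ?_⟩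
  have hdouble : #A * #{S ∈ T | S ⊆ K} ≤ #T * (n - k).choose (m - k) := by
    have h := card_nsmul_le_card_nsmul (R := ℕ) (fun K S : Finset α => S ⊆ K) hKmin hsupersets
    rwa [smul_eq_mul, smul_eq_mul] at h
  refine Nat.le_of_mul_le_mul_left ?_ (hA ▸ Nat.choose_pos hm : 0 < #A)
  calc #A * (#{S ∈ T | S ⊆ K} * n.choose k)
      = #A * #{S ∈ T | S ⊆ K} * n.choose k := by ring
    _ ≤ #T * (n - k).choose (m - k) * n.choose k := Nat.mul_le_mul_right _ hdouble
    _ = #A * (#T * m.choose k) := by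
        rw [hA, mul_assoc, mul_comm _ (n.choose k), ← Nat.choose_mul hkm]
        ring

theorem Finset.exists_card_eq_card_filter_subset_le_mul_div_pow (T : Finset (Finset α)) {k m : ℕ}
    (hT : ∀ S ∈ T, k ≤ #S) (hm : m ≤ Fintype.card α) :
    ∃ K : Finset α, #K = m ∧ (#{S ∈ T | S ⊆ K} : ℝ) ≤ #T * (m / Fintype.card α) ^ k := by
  set n := Fintype.card α
  rcases lt_or_ge m k with hmk | hkm
  · obtain ⟨K, -, hK⟩ := exists_subset_card_eq (show m ≤ #(univ : Finset α) by rwa [card_univ])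
    refine ⟨K, hK, ?_⟩
    have hempty : {S ∈ T | S ⊆ K} = ∅ :=
      filter_eq_empty_iff.2 fun S hS hSK => by have := card_le_card hSK; have := hT S hS; omega
    rw [hempty, card_empty, Nat.cast_zero]
    positivity
  obtain ⟨K, hK, hcount⟩ := exists_card_eq_card_filter_subset_mul_choose_le T hT hkm hm
  refine ⟨K, hK, ?_⟩
  have hchoose_pos : 0 < n.choose k := Nat.choose_pos (hkm.trans hm)
  have hnat : #{S ∈ T | S ⊆ K} * n ^ k ≤ #T * m ^ k := by
    refine Nat.le_of_mul_le_mul_right ?_ hchoose_pos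
    calc #{S ∈ T | S ⊆ K} * n ^ k * n.choose k
        = #{S ∈ T | S ⊆ K} * n.choose k * n ^ k := by ring
      _ ≤ #T * m.choose k * n ^ k := Nat.mul_le_mul_right _ hcount
      _ ≤ #T * m ^ k * n.choose k := by
          rw [mul_assoc, mul_assoc]
          exact Nat.mul_le_mul_left _ (Nat.choose_mul_pow_le_pow_mul_choose hm k)
  have hpow_pos : (0 : ℝ) < n ^ k := mod_cast hchoose_pos.trans_le (Nat.choose_le_pow n k)
  rw [div_pow, mul_div_assoc', le_div_iff₀ hpow_pos]
  exact_mod_cast hnat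

end Counting

lemma Nat.le_of_sq_le_mul_rpow {m n : ℕ} {c ε : ℝ} (hc : c < 1) (hε : ε ≤ 2)
    (h : (m : ℝ) ^ 2 ≤ c * n ^ ε) : m ≤ n := by
  rcases Nat.eq_zero_or_pos n with rfl | hn
  · have hlt : (m : ℝ) ^ 2 < 1 := by
      obtain ⟨-, h0⟩ | ⟨-, h0⟩ := Real.zero_rpow_eq_iff.1 (rfl : (0 : ℝ) ^ ε = _) <;>
        rw [Nat.cast_zero, h0] at h <;> linarith
    have : m ^ 2 < 1 := by exact_mod_cast hlt
    simpa using this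
  have hn1 : (1 : ℝ) ≤ n := mod_cast hn
  have hsq : (m : ℝ) ^ 2 ≤ (n : ℝ) ^ 2 :=
    calc (m : ℝ) ^ 2 ≤ c * n ^ ε := h
      _ ≤ n ^ ε := by nlinarith [Real.rpow_nonneg (Nat.cast_nonneg n) ε]
      _ ≤ n ^ (2 : ℝ) := Real.rpow_le_rpow_of_exponent_le hn1 hε
      _ = n ^ 2 := Real.rpow_ofNat _ 2
  exact_mod_cast le_of_pow_le_pow_left₀ two_ne_zero (Nat.cast_nonneg n) hsq

lemma Real.rpow_three_sub_mul_div_pow_le {x y c ε : ℝ} (hx : 0 ≤ x) (hy : 0 ≤ y)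
    (h : y ^ 2 ≤ c * x ^ ε) : x ^ (3 - ε) * (y / x) ^ 3 ≤ c * y := by
  rcases hx.eq_or_lt with rfl | hx
  · rw [div_zero, zero_pow three_ne_zero, mul_zero]
    rcases hy.eq_or_lt with rfl | hy
    · rw [mul_zero]
    have hc : 0 < c := pos_of_mul_pos_left ((pow_pos hy 2).trans_le h) (Real.zero_rpow_nonneg ε)
    positivity
  have hxε : 0 < x ^ ε := Real.rpow_pos_of_pos hx ε
  calc x ^ (3 - ε) * (y / x) ^ 3 = y ^ 2 / x ^ ε * y := by
        rw [Real.rpow_sub hx, Real.rpow_ofNat]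
        field_simp
    _ ≤ c * y := mul_le_mul_of_nonneg_right ((div_le_iff₀ hxε).2 h) hy

theorem stmt4_general {n : ℕ} (ε : ℝ) (hε2 : ε < 2)
    (f : (Fin n → ZMod 2) → ZMod 2) (M : Finset (Finset (Fin n))) (hM : IsANF f M)
    (hT : (crucialCount M : ℝ) ≤ (n : ℝ) ^ ((3 : ℝ) - ε)) :
    ∃ K : Finset (Fin n),
      K.card = ⌊Real.sqrt (2 / 3 * (n : ℝ) ^ ε)⌋₊ ∧
      ∀ M' : Finset (Finset (Fin n)), IsANF (zeroRestrict f K) M' →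
        (crucialCount M' : ℝ) ≤ 2 / 3 * K.card := by
  set m := ⌊Real.sqrt (2 / 3 * (n : ℝ) ^ ε)⌋₊
  have hm_sq : (m : ℝ) ^ 2 ≤ 2 / 3 * n ^ ε :=
    (Real.le_sqrt (Nat.cast_nonneg _) (by positivity)).1 (Nat.floor_le (Real.sqrt_nonneg _))
  have hmn : m ≤ n := Nat.le_of_sq_le_mul_rpow (by norm_num) hε2.le hm_sq
  obtain ⟨K, hK, hcount⟩ := exists_card_eq_card_filter_subset_le_mul_div_pow
    {S ∈ M | 3 ≤ #S} (k := 3) (m := m) (fun S hS => (mem_filter.1 hS).2)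
    (by rwa [Fintype.card_fin])
  refine ⟨K, hK, fun M' hM' => ?_⟩
  rw [hM.crucialCount_eq hM', ← filter_filter, hK]
  rw [Fintype.card_fin] at hcount
  calc _ ≤ _ := hcount
    _ ≤ (n : ℝ) ^ ((3 : ℝ) - ε) * (m / n) ^ 3 := by gcongr; exact hT
    _ ≤ 2 / 3 * m :=
        Real.rpow_three_sub_mul_div_pow_le (Nat.cast_nonneg n) (Nat.cast_nonneg m) hm_sq

/-- for `0 < ε < 2`, a Boolean function with at most `n^(3-ε)` crucial terms
has a `0`-restriction on `n' = ⌊√((2/3)·n^ε)⌋` variables with at most `(2/3)n'` crucial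
terms. -/
theorem stmt4 {n : ℕ} (ε : ℝ) (hε1 : 0 < ε) (hε2 : ε < 2)
    (f : (Fin n → ZMod 2) → ZMod 2) (M : Finset (Finset (Fin n))) (hM : IsANF f M)
    (hT : (crucialCount M : ℝ) ≤ (n : ℝ) ^ ((3 : ℝ) - ε)) :
    ∃ K : Finset (Fin n),
      K.card = ⌊Real.sqrt (2 / 3 * (n : ℝ) ^ ε)⌋₊ ∧
      ∀ M' : Finset (Finset (Fin n)), IsANF (zeroRestrict f K) M' →
        (crucialCount M' : ℝ) ≤ 2 / 3 * K.card :=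
  stmt4_general ε hε2 f M hM hT
end

section
/- Let f : F_2^n → F_2 be a Boolean function of algebraic degree at most 2. Then f is constant on some affine subspace of F_2^n of dimension at least ⌊n/2⌋. -/
open Finset

/-!
The polar form `B(x, y) = f(x + y) + f x + f y + f 0` of a Boolean function of degree at most 2
is an alternating bilinear form. We argue by induction on the dimension of a subspace `U`.
If `B` vanishes on `U`, then `f + f 0` is linear on `U` and `f` is constant on its kernel, a
subspace of codimension at most 1. Otherwise pick `a, b ∈ U` with `B(a, b) = 1`; the subspace
`U' = {x ∈ U | B(x, a) = B(x, b) = 0}` has codimension at most 2 and does not contain `a`, `b` or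
`b - a`. For `t ∈ {0, a, b}` and `x ∈ U'` we have `f (x + t) = f x + f t + f 0`, so if `f` is
constant on `v + W ⊆ U'`, it is also constant on `v + t + W`. Two of `f 0, f a, f b` agree,
say `f t = f t'`, and then `f` is constant on `v + t + (W ⊔ span {t' - t})`.
-/

open Module Submodule

section Polar

variable {V : Type*} [AddCommGroup V]

def polar (f : V → ZMod 2) (x y : V) : ZMod 2 :=
  f (x + y) + f x + f y + f 0

/-- Vanishing of the third derivatives `D_x D_y D_z f (0)`. -/
def IsQuadratic (f : V → ZMod 2) : Prop :=
  ∀ x y z, polar f (x + y) z = polar f x z + polar f y z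

theorem polar_comm (f : V → ZMod 2) (x y : V) : polar f x y = polar f y x := by
  unfold polar
  rw [add_comm x y]
  ring

theorem polar_self [Module (ZMod 2) V] (f : V → ZMod 2) (x : V) : polar f x x = 0 := by
  have hx : x + x = 0 := by
    rw [← two_smul (ZMod 2), show (2 : ZMod 2) = 0 from rfl, zero_smul]
  unfold polar
  rw [hx]
  grind

theorem polar_zero_right (f : V → ZMod 2) (x : V) : polar f x 0 = 0 := by
  unfold polar
  rw [add_zero]
  grind

theorem apply_add_of_polar_eq_zero {f : V → ZMod 2} {x y : V} (h : polar f x y = 0) :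
    f (x + y) = f x + f y + f 0 := by
  unfold polar at h
  grind

namespace IsQuadratic

variable {f : V → ZMod 2}

def polarLeft [Module (ZMod 2) V] (hf : IsQuadratic f) (y : V) : V →ₗ[ZMod 2] ZMod 2 :=
  (AddMonoidHom.mk' (fun x => polar f x y) fun x x' => hf x x' y).toZModLinearMap 2

@[simp]
theorem polarLeft_apply [Module (ZMod 2) V] (hf : IsQuadratic f) (x y : V) :
    hf.polarLeft y x = polar f x y :=
  rfl

theorem sum {ι : Type*} {s : Finset ι} {g : ι → V → ZMod 2} (hg : ∀ i ∈ s, IsQuadratic (g i)) :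
    IsQuadratic fun x => ∑ i ∈ s, g i x := by
  have polar_sum : ∀ x y, polar (fun x => ∑ i ∈ s, g i x) x y = ∑ i ∈ s, polar (g i) x y := by
    intro x y
    simp only [polar, Finset.sum_add_distrib]
  intro x y z
  simp only [polar_sum, ← Finset.sum_add_distrib]
  exact Finset.sum_congr rfl fun i hi => hg i hi x y z

end IsQuadratic

end Polar

theorem isQuadratic_prod {ι : Type*} {S : Finset ι} (hS : S.card ≤ 2) :
    IsQuadratic fun x : ι → ZMod 2 => ∏ j ∈ S, x j := by
  classical
  intro x y z
  simp only [polar, Pi.add_apply, Pi.zero_apply]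
  obtain h0 | h1 | h2 : S.card = 0 ∨ S.card = 1 ∨ S.card = 2 := by omega
  · obtain rfl := Finset.card_eq_zero.mp h0
    simp only [Finset.prod_empty]
    grind
  · obtain ⟨i, rfl⟩ := Finset.card_eq_one.mp h1
    simp only [Finset.prod_singleton]
    grind
  · obtain ⟨i, j, hij, rfl⟩ := Finset.card_eq_two.mp h2
    simp only [Finset.prod_pair hij]
    grind

theorem isQuadratic_anfEval {n : ℕ} {M : Finset (Finset (Fin n))}
    (hdeg : ∀ S ∈ M, S.card ≤ 2) : IsQuadratic (anfEval M) :=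
  IsQuadratic.sum fun S hS => isQuadratic_prod (hdeg S hS)

section Rank

variable {K V : Type*} [Field K] [AddCommGroup V] [Module K V] [FiniteDimensional K V]

theorem finrank_le_finrank_ker_add_one (ℓ : V →ₗ[K] K) :
    finrank K V ≤ finrank K (LinearMap.ker ℓ) + 1 := by
  rcases eq_or_ne ℓ 0 with rfl | hℓ
  · rw [LinearMap.ker_zero, finrank_top]
    omega
  · exact (Module.Dual.finrank_ker_add_one_of_ne_zero hℓ).ge

theorem finrank_le_finrank_inf_ker_add_one (U : Submodule K V) (ℓ : V →ₗ[K] K) :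
    finrank K U ≤ finrank K (U ⊓ LinearMap.ker ℓ : Submodule K V) + 1 := by
  rw [← map_comap_subtype, finrank_map_subtype_eq, ← LinearMap.ker_domRestrict]
  exact finrank_le_finrank_ker_add_one _

end Rank

section Coset

variable {V : Type*} [AddCommGroup V] [Module (ZMod 2) V] {f : V → ZMod 2}

variable (f) in
def HasHalfRankConstCoset (U : Submodule (ZMod 2) V) : Prop :=
  ∃ W ≤ U, ∃ v ∈ U, finrank (ZMod 2) U / 2 ≤ finrank (ZMod 2) W ∧ ∀ w ∈ W, f (v + w) = f v

theorem const_on_sup_span_sub {U' W : Submodule (ZMod 2) V} {v t t' : V} (hW : W ≤ U')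
    (hv : v ∈ U') (hconst : ∀ w ∈ W, f (v + w) = f v) (ht : ∀ x ∈ U', polar f x t = 0)
    (ht' : ∀ x ∈ U', polar f x t' = 0) (heq : f t = f t') :
    ∀ w ∈ W ⊔ span (ZMod 2) {t' - t}, f (v + t + w) = f (v + t) := by
  intro w' hw'
  obtain ⟨w, hw, _, hs, rfl⟩ := mem_sup.mp hw'
  obtain ⟨c, rfl⟩ := mem_span_singleton.mp hs
  have hvw : v + w ∈ U' := U'.add_mem hv (hW hw)
  have hvt : f (v + t) = f v + f t + f 0 := apply_add_of_polar_eq_zero (ht v hv)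
  obtain rfl | rfl := (by decide : ∀ c : ZMod 2, c = 0 ∨ c = 1) c
  · rw [zero_smul, add_zero, add_right_comm, apply_add_of_polar_eq_zero (ht _ hvw), hconst w hw,
      hvt]
  · rw [one_smul, show v + t + (w + (t' - t)) = v + w + t' by abel,
      apply_add_of_polar_eq_zero (ht' _ hvw), hconst w hw, hvt, heq]

variable [FiniteDimensional (ZMod 2) V]

theorem exists_const_of_forall_polar_eq_zero (U : Submodule (ZMod 2) V)
    (hU : ∀ x ∈ U, ∀ y ∈ U, polar f x y = 0) :
    ∃ W ≤ U, finrank (ZMod 2) U ≤ finrank (ZMod 2) W + 1 ∧ ∀ w ∈ W, f w = f 0 := by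
  let ℓ : U →ₗ[ZMod 2] ZMod 2 :=
    (AddMonoidHom.mk' (fun x : U => f x + f 0) fun x y => by
      have := apply_add_of_polar_eq_zero (hU x x.2 y y.2)
      simp only [Submodule.coe_add]
      grind).toZModLinearMap 2
  refine ⟨(LinearMap.ker ℓ).map U.subtype, map_subtype_le _ _, ?_, ?_⟩
  · rw [finrank_map_subtype_eq]
    exact finrank_le_finrank_ker_add_one ℓ
  · rintro _ ⟨w, hw, rfl⟩
    have hw : f w + f 0 = 0 := hw
    simp only [subtype_apply]
    grind

theorem hasHalfRankConstCoset_of_polar_ne_zero (hf : IsQuadratic f) {U : Submodule (ZMod 2) V}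
    {a b : V} (ha : a ∈ U) (hb : b ∈ U) (hab : polar f a b ≠ 0)
    (ih : ∀ U' < U, HasHalfRankConstCoset f U') : HasHalfRankConstCoset f U := by
  set U' := U ⊓ LinearMap.ker (hf.polarLeft a) ⊓ LinearMap.ker (hf.polarLeft b)
  have hU'U : U' ≤ U := inf_le_left.trans inf_le_left
  have hU'a : ∀ x ∈ U', polar f x a = 0 := fun x hx => hx.1.2
  have hU'b : ∀ x ∈ U', polar f x b = 0 := fun x hx => hx.2
  have hU'0 : ∀ x ∈ U', polar f x 0 = 0 := fun x _ => polar_zero_right f x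
  have hrank : finrank (ZMod 2) U ≤ finrank (ZMod 2) U' + 2 := by
    have h₁ := finrank_le_finrank_inf_ker_add_one U (hf.polarLeft a)
    have h₂ : finrank (ZMod 2) (U ⊓ LinearMap.ker (hf.polarLeft a) : Submodule (ZMod 2) V) ≤
        finrank (ZMod 2) U' + 1 :=
      finrank_le_finrank_inf_ker_add_one _ _
    omega
  have ha' : a ∉ U' := fun h => hab (hU'b a h)
  have hb' : b ∉ U' := fun h => hab (by rw [polar_comm]; exact hU'a b h)
  have hba' : b - a ∉ U' := fun h => hab <| by
    have h := hU'a (b - a) h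
    rwa [← hf.polarLeft_apply, map_sub, hf.polarLeft_apply, hf.polarLeft_apply, polar_self,
      sub_zero, polar_comm] at h
  obtain ⟨W, hWU', v, hv, hWrank, hconst⟩ := ih U' (lt_of_le_of_ne hU'U fun h => ha' (h ▸ ha))
  have extend : ∀ t ∈ U, ∀ t' ∈ U, t' - t ∉ U' → (∀ x ∈ U', polar f x t = 0) →
      (∀ x ∈ U', polar f x t' = 0) → f t = f t' → HasHalfRankConstCoset f U := by
    intro t ht t' ht' hs hUt hUt' heq
    refine ⟨W ⊔ span (ZMod 2) {t' - t},
      sup_le (hWU'.trans hU'U) ((span_singleton_le_iff_mem _ _).mpr (U.sub_mem ht' ht)),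
      v + t, U.add_mem (hU'U hv) ht, ?_, const_on_sup_span_sub hWU' hv hconst hUt hUt' heq⟩
    rw [finrank_sup_span_singleton fun h => hs (hWU' h)]
    omega
  obtain h | h | h := (by decide : ∀ p q r : ZMod 2, p = q ∨ p = r ∨ q = r) (f 0) (f a) (f b)
  · exact extend 0 U.zero_mem a ha (by rwa [sub_zero]) hU'0 hU'a h
  · exact extend 0 U.zero_mem b hb (by rwa [sub_zero]) hU'0 hU'b h
  · exact extend a ha b hb hba' hU'a hU'b h

theorem IsQuadratic.hasHalfRankConstCoset (hf : IsQuadratic f) (U : Submodule (ZMod 2) V) :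
    HasHalfRankConstCoset f U := by
  induction U using WellFoundedLT.induction with
  | _ U ih =>
  by_cases hU : ∀ x ∈ U, ∀ y ∈ U, polar f x y = 0
  · obtain ⟨W, hWU, hrank, hconst⟩ := exists_const_of_forall_polar_eq_zero U hU
    exact ⟨W, hWU, 0, U.zero_mem, by omega, by simpa using hconst⟩
  · push Not at hU
    obtain ⟨a, ha, b, hb, hab⟩ := hU
    exact hasHalfRankConstCoset_of_polar_ne_zero hf ha hb hab ih

end Coset

/-- a Boolean function of algebraic degree at most 2 is constant on some
affine subspace of dimension at least `⌊n/2⌋`. -/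
theorem stmt9 {n : ℕ} (f : (Fin n → ZMod 2) → ZMod 2) (M : Finset (Finset (Fin n)))
    (hM : IsANF f M) (hdeg : ∀ S ∈ M, S.card ≤ 2) :
    ∃ (W : Submodule (ZMod 2) (Fin n → ZMod 2)) (v : Fin n → ZMod 2) (u : ZMod 2),
      n / 2 ≤ Module.finrank (ZMod 2) W ∧ ∀ w ∈ W, f (v + w) = u := by
  obtain rfl : f = anfEval M := funext hM
  obtain ⟨W, -, v, -, hrank, hconst⟩ := (isQuadratic_anfEval hdeg).hasHalfRankConstCoset ⊤
  rw [finrank_top, Module.finrank_fin_fun] at hrank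
  exact ⟨W, v, _, hrank, hconst⟩
end
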